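/- The ring 𝓡 = ℂ[s,A,B,C,D,E]/I_{sE}, viewed as a module over ℂ[s] via the natural map s ↦ class of s, is flat. -/

import Mathlib

open MvPolynomial

/-- Variables: `s = X 0`, `A = X 1`, `B = X 2`, `C = X 3`, `D = X 4`, `E = X 5`. -/
noncomputable def n₁ : MvPolynomial (Fin 6) ℂ :=
  ((X 1) ^ 2 + (X 0) ^ 5 * (X 5) ^ 5) * (X 1) ^ 2 - X 2 * X 3

noncomputable def n₂ : MvPolynomial (Fin 6) ℂ :=
  ((X 1) ^ 2 + (X 0) ^ 5 * (X 5) ^ 5) * ((X 2) ^ 2 - X 4) - X 3 * X 4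

noncomputable def n₃ : MvPolynomial (Fin 6) ℂ :=
  X 2 * ((X 2) ^ 2 - X 4) - (X 1) ^ 2 * X 4

/-- The ideal generated by the three 2×2 minors of
`[[A² + s⁵E⁵, B, D], [C, A², B² − D]]`. -/
noncomputable def I_sE : Ideal (MvPolynomial (Fin 6) ℂ) :=
  Ideal.span {n₁, n₂, n₃}

/-- The `ℂ[s]`-algebra structure on `𝓡 = ℂ[s,A,B,C,D,E]/I_{sE}` given by the
natural map `s ↦` class of `s`. -/
noncomputable instance : Algebra (Polynomial ℂ) (MvPolynomial (Fin 6) ℂ ⧸ I_sE) :=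
  (Polynomial.aeval (Ideal.Quotient.mk I_sE (X 0)) :
    Polynomial ℂ →ₐ[ℂ] MvPolynomial (Fin 6) ℂ ⧸ I_sE).toRingHom.toAlgebra

/-!
Over the principal ideal domain `ℂ[s]` flatness is torsion-freeness, and since `ℂ` is
algebraically closed it suffices that every `s - c` is a nonzerodivisor on `𝓡`.
If `(s - c) f = ∑ gᵢ nᵢ`, setting `s = c` turns `g` into a syzygy of the minors of the fiber
matrix. In the fiber, viewed as polynomials in `C` over `ℂ[A, B, D, E]`, the minors have degree
at most one in `C`, and an induction on the degree (using that `B, D` is a regular sequence)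
shows that every syzygy is a combination of the two Laplace syzygies, obtained by expanding a
row of the matrix against its minors. These lift to syzygies over `ℂ[s, A, …, E]`, so `g` agrees
with a genuine syzygy modulo `s - c`, and cancelling `s - c` puts `f` in `I_{sE}`.
-/

open Matrix

namespace Matrix

variable {R S : Type*} [CommRing R] [CommRing S]

def minors (M : Matrix (Fin 2) (Fin 3) R) : Fin 3 → R :=
  ![M 0 0 * M 1 1 - M 0 1 * M 1 0, M 0 0 * M 1 2 - M 1 0 * M 0 2,
    M 0 1 * M 1 2 - M 1 1 * M 0 2]

def laplace (M : Matrix (Fin 2) (Fin 3) R) (k : Fin 2) : Fin 3 → R :=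
  ![M k 2, -M k 1, M k 0]

def laplaceSpan (M : Matrix (Fin 2) (Fin 3) R) : Submodule R (Fin 3 → R) :=
  Submodule.span R {M.laplace 0, M.laplace 1}

lemma laplace_dotProduct_minors (M : Matrix (Fin 2) (Fin 3) R) (k : Fin 2) :
    M.laplace k ⬝ᵥ M.minors = 0 := by
  fin_cases k <;> simp [laplace, minors, dotProduct, Fin.sum_univ_three] <;> ring

lemma dotProduct_minors_eq_zero_of_mem_laplaceSpan {M : Matrix (Fin 2) (Fin 3) R}
    {g : Fin 3 → R} (hg : g ∈ M.laplaceSpan) : g ⬝ᵥ M.minors = 0 := by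
  obtain ⟨r, s, rfl⟩ := Submodule.mem_span_pair.mp hg
  simp [add_dotProduct, smul_dotProduct, laplace_dotProduct_minors]

lemma minors_map (M : Matrix (Fin 2) (Fin 3) R) (f : R →+* S) :
    (M.map f).minors = f ∘ M.minors := by
  ext i; fin_cases i <;> simp [minors]

lemma laplace_map (M : Matrix (Fin 2) (Fin 3) R) (f : R →+* S) (k : Fin 2) :
    (M.map f).laplace k = f ∘ M.laplace k := by
  ext i; fin_cases i <;> simp [laplace]

end Matrix

theorem Ideal.mem_span_range_of_mul_mem_of_syzygy_lift {S ι : Type*} [CommRing S] [Fintype ι]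
    {n : ι → S} {t : S} (ht : IsLeftRegular t)
    (hlift : ∀ g : ι → S, t ∣ g ⬝ᵥ n → ∃ g' : ι → S, g' ⬝ᵥ n = 0 ∧ ∀ i, t ∣ g i - g' i)
    {f : S} (hf : t * f ∈ Ideal.span (Set.range n)) : f ∈ Ideal.span (Set.range n) := by
  obtain ⟨g, hg⟩ := Ideal.mem_span_range_iff_exists_fun.mp hf
  obtain ⟨g', hg', hdvd⟩ := hlift g ⟨f, hg⟩
  choose w hw using hdvd
  refine Ideal.mem_span_range_iff_exists_fun.mpr ⟨w, ht ?_⟩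
  calc t * (w ⬝ᵥ n) = (g - g') ⬝ᵥ n := by
        rw [← smul_eq_mul, ← smul_dotProduct]
        congr
        ext i
        exact (hw i).symm
    _ = t * f := by rw [sub_dotProduct, hg', sub_zero]; exact hg

theorem Matrix.exists_syzygy_lift_minors {S T : Type*} [CommRing S] [CommRing T] (ε : S →+* T)
    (ι : T →+* S) (hι : ∀ y, ε (ι y) = y) {t : S} (hker : RingHom.ker ε = Ideal.span {t})
    (M : Matrix (Fin 2) (Fin 3) S)
    (hsyz : ∀ g, g ⬝ᵥ (M.map ε).minors = 0 → g ∈ (M.map ε).laplaceSpan)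
    (g : Fin 3 → S) (hg : t ∣ g ⬝ᵥ M.minors) :
    ∃ g' : Fin 3 → S, g' ⬝ᵥ M.minors = 0 ∧ ∀ i, t ∣ g i - g' i := by
  have hεg : (ε ∘ g) ⬝ᵥ (M.map ε).minors = 0 := by
    rw [minors_map, ← RingHom.map_dotProduct, ← RingHom.mem_ker, hker]
    exact Ideal.mem_span_singleton.mpr hg
  obtain ⟨h₀, h₁, hh⟩ := Submodule.mem_span_pair.mp (hsyz _ hεg)
  refine ⟨ι h₀ • M.laplace 0 + ι h₁ • M.laplace 1, ?_, fun i => ?_⟩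
  · exact dotProduct_minors_eq_zero_of_mem_laplaceSpan
      (add_mem (Submodule.smul_mem _ _ (Submodule.subset_span (by simp)))
        (Submodule.smul_mem _ _ (Submodule.subset_span (by simp))))
  · rw [← Ideal.mem_span_singleton, ← hker, RingHom.mem_ker, map_sub, sub_eq_zero]
    have := congrFun hh i
    simp only [laplace_map, Pi.add_apply, Pi.smul_apply, Function.comp_apply, smul_eq_mul] at this
    simp [← this, hι]

namespace Polynomial

theorem isTorsionFree_of_isSMulRegular_X_sub_C {k M : Type*} [Field k] [IsAlgClosed k]
    [AddCommGroup M] [Module k[X] M] (h : ∀ c : k, IsSMulRegular M (X - C c)) :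
    Module.IsTorsionFree k[X] M where
  isSMulRegular p hp := by
    rw [← C_leadingCoeff_mul_prod_multiset_X_sub_C (p := p) IsAlgClosed.card_roots_eq_natDegree]
    refine ((isUnit_C.mpr (leadingCoeff_ne_zero.mpr hp.ne_zero).isUnit).isSMulRegular M).mul ?_
    refine Multiset.prod_induction _ _ (fun _ _ => IsSMulRegular.mul) (IsSMulRegular.one M) ?_
    simp only [Multiset.mem_map]
    rintro _ ⟨c, -, rfl⟩
    exact h c

variable {U : Type*} [CommRing U]

noncomputable def fiberMatrix (a b c d e : U) : Matrix (Fin 2) (Fin 3) U[X] :=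
  !![C a, C b, C d; X, C c, C e]

variable {a b c d e : U}

lemma dotProduct_fiberMatrix_minors (g : Fin 3 → U[X]) :
    g ⬝ᵥ (fiberMatrix a b c d e).minors =
      g 0 * (C a * C c - C b * X) + g 1 * (C a * C e - X * C d) +
        g 2 * (C b * C e - C c * C d) := by
  rw [vec3_dotProduct]; rfl

lemma fiberMatrix_laplace_zero : (fiberMatrix a b c d e).laplace 0 = ![C d, -C b, C a] := by
  ext i; fin_cases i <;> simp [laplace, fiberMatrix]

lemma fiberMatrix_laplace_one : (fiberMatrix a b c d e).laplace 1 = ![C e, -C c, X] := by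
  ext i; fin_cases i <;> simp [laplace, fiberMatrix]

lemma top_coeffs_of_syzygy {N : ℕ} {g₀ g₁ : U[X]} {u : U}
    (h : g₀ * (C a * C c - C b * X) + g₁ * (C a * C e - X * C d) +
      C u * (C b * C e - C c * C d) = 0)
    (h₀ : g₀.degree < ↑(N + 1)) (h₁ : g₁.degree < ↑(N + 1)) :
    b * g₀.coeff N + d * g₁.coeff N = 0 := by
  have h' : (g₀ * C b + g₁ * C d) * X =
      g₀ * C (a * c) + g₁ * C (a * e) + C (u * (b * e - c * d)) := by
    simp only [C_mul, C_sub]; linear_combination -h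
  have := congrArg (coeff · (N + 1)) h'
  simp only [coeff_mul_X, coeff_add, coeff_mul_C, coeff_C, Nat.succ_ne_zero, if_false,
    (degree_lt_iff_coeff_zero _ _).mp h₀ (N + 1) le_rfl,
    (degree_lt_iff_coeff_zero _ _).mp h₁ (N + 1) le_rfl, zero_mul, add_zero] at this
  linear_combination this

lemma degree_sub_C_mul_X_pow_lt {p : U[X]} {N : ℕ} (hp : p.degree < ↑(N + 1)) :
    (p - C (p.coeff N) * X ^ N).degree < ↑N := by
  rw [degree_lt_iff_coeff_zero] at hp ⊢
  intro k hk
  rcases hk.eq_or_lt with rfl | hk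
  · simp
  · simp [coeff_X_pow, hk.ne', hp k hk]

variable [IsDomain U]

lemma exists_mem_laplaceSpan_degree_lt_sub (hd : d ≠ 0) (hbd : ∀ x, d ∣ b * x → d ∣ x)
    {N : ℕ} {g : Fin 3 → U[X]} (hg : g ⬝ᵥ (fiberMatrix a b c d e).minors = 0)
    (h₀ : (g 0).degree < ↑(N + 1)) (h₁ : (g 1).degree < ↑(N + 1)) (h₂ : (g 2).degree ≤ ↑(N + 1)) :
    ∃ v ∈ (fiberMatrix a b c d e).laplaceSpan,
      ((g - v) 0).degree < N ∧ ((g - v) 1).degree < N ∧ ((g - v) 2).degree ≤ N := by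
  have hF₀ : (fiberMatrix a b c d e).laplace 0 ∈ (fiberMatrix a b c d e).laplaceSpan :=
    Submodule.subset_span (by simp)
  have hF₁ : (fiberMatrix a b c d e).laplace 1 ∈ (fiberMatrix a b c d e).laplaceSpan :=
    Submodule.subset_span (by simp)
  rw [degree_lt_iff_coeff_zero] at h₀ h₁
  rw [degree_le_iff_coeff_zero] at h₂
  set q := (g 2).divX
  set u := (g 2).coeff 0
  have hq : ∀ k, N + 1 ≤ k → q.coeff k = 0 := fun k hk => by
    rw [coeff_divX]; exact h₂ _ (by exact_mod_cast Nat.lt_succ_of_le hk)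
  -- Subtracting `q • laplace 1` makes the last entry constant.
  have hsyz : (g 0 - q * C e) * (C a * C c - C b * X) + (g 1 + q * C c) * (C a * C e - X * C d)
      + C u * (C b * C e - C c * C d) = 0 := by
    have := dotProduct_minors_eq_zero_of_mem_laplaceSpan (Submodule.smul_mem _ q hF₁)
    rw [dotProduct_fiberMatrix_minors] at hg this
    simp only [fiberMatrix_laplace_one, Pi.smul_apply, smul_eq_mul, cons_val_zero, cons_val_one,
      cons_val] at this
    linear_combination hg - this + (C b * C e - C c * C d) * X_mul_divX_add (g 2)
  have hlt₀ : (g 0 - q * C e).degree < ↑(N + 1) :=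
    (degree_lt_iff_coeff_zero _ _).mpr fun k hk => by simp [coeff_mul_C, h₀ k hk, hq k hk]
  have hlt₁ : (g 1 + q * C c).degree < ↑(N + 1) :=
    (degree_lt_iff_coeff_zero _ _).mpr fun k hk => by simp [coeff_mul_C, h₁ k hk, hq k hk]
  have htop := top_coeffs_of_syzygy hsyz hlt₀ hlt₁
  -- The top coefficients form a syzygy of `(b, d)`, hence a multiple of `(d, -b)`.
  obtain ⟨t, ht₀⟩ := hbd ((g 0 - q * C e).coeff N)
    ⟨-(g 1 + q * C c).coeff N, by linear_combination htop⟩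
  have ht₁ : (g 1 + q * C c).coeff N = -(b * t) :=
    mul_left_cancel₀ hd (by linear_combination htop - b * ht₀)
  refine ⟨q • (fiberMatrix a b c d e).laplace 1 + (C t * X ^ N) • (fiberMatrix a b c d e).laplace 0,
    add_mem (Submodule.smul_mem _ _ hF₁) (Submodule.smul_mem _ _ hF₀), ?_, ?_, ?_⟩
  all_goals simp only [fiberMatrix_laplace_zero, fiberMatrix_laplace_one, Pi.sub_apply,
    Pi.add_apply, Pi.smul_apply, smul_eq_mul, cons_val_zero, cons_val_one, cons_val]
  · convert degree_sub_C_mul_X_pow_lt hlt₀ using 2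
    rw [ht₀, C_mul]; ring
  · convert degree_sub_C_mul_X_pow_lt hlt₁ using 2
    rw [ht₁, C_neg, C_mul]; ring
  · have : g 2 - (q * X + C t * X ^ N * C a) = C u - C (t * a) * X ^ N := by
      rw [C_mul]; linear_combination -X_mul_divX_add (g 2)
    rw [this]
    exact (degree_sub_le _ _).trans (max_le (degree_C_le.trans (by exact_mod_cast N.zero_le))
      (degree_C_mul_X_pow_le _ _))

theorem mem_laplaceSpan_of_dotProduct_minors_eq_zero (hd : d ≠ 0) (hbd : ∀ x, d ∣ b * x → d ∣ x)
    (hm : b * e - c * d ≠ 0) {g : Fin 3 → U[X]}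
    (hg : g ⬝ᵥ (fiberMatrix a b c d e).minors = 0) : g ∈ (fiberMatrix a b c d e).laplaceSpan := by
  suffices key : ∀ N : ℕ, ∀ g : Fin 3 → U[X], g ⬝ᵥ (fiberMatrix a b c d e).minors = 0 →
      (g 0).degree < N → (g 1).degree < N → (g 2).degree ≤ N →
      g ∈ (fiberMatrix a b c d e).laplaceSpan by
    have hlt : ∀ i, (g i).degree < ↑((g 0).natDegree + (g 1).natDegree + (g 2).natDegree + 1) := by
      intro i
      refine degree_le_natDegree.trans_lt (WithBot.coe_lt_coe.mpr ?_)
      fin_cases i <;> simp <;> omega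
    exact key _ g hg (hlt 0) (hlt 1) (hlt 2).le
  intro N
  induction N with
  | zero =>
    intro g hg h₀ h₁ h₂
    have h₀ : g 0 = 0 := degree_eq_bot.mp (Nat.WithBot.lt_zero_iff.mp h₀)
    have h₁ : g 1 = 0 := degree_eq_bot.mp (Nat.WithBot.lt_zero_iff.mp h₁)
    have h₂ : g 2 = C ((g 2).coeff 0) := eq_C_of_degree_le_zero h₂
    rw [dotProduct_fiberMatrix_minors, h₀, h₁, h₂] at hg
    simp only [zero_mul, zero_add, ← C_mul, ← C_sub, C_eq_zero, mul_eq_zero] at hg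
    have h₂ : g 2 = 0 := by rw [h₂, hg.resolve_right hm, C_0]
    have : g = 0 := by ext i : 1; fin_cases i <;> assumption
    rw [this]
    exact zero_mem _
  | succ N ih =>
    intro g hg h₀ h₁ h₂
    obtain ⟨v, hv, h₀', h₁', h₂'⟩ := exists_mem_laplaceSpan_degree_lt_sub hd hbd hg h₀ h₁ h₂
    have := ih (g - v) (by rw [sub_dotProduct, hg, dotProduct_minors_eq_zero_of_mem_laplaceSpan hv,
      sub_zero]) h₀' h₁' h₂'
    simpa using add_mem this hv

end Polynomial

open scoped Polynomial

noncomputable def sEMatrix : Matrix (Fin 2) (Fin 3) (MvPolynomial (Fin 6) ℂ) :=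
  !![X 1 ^ 2 + X 0 ^ 5 * X 5 ^ 5, X 2, X 4; X 3, X 1 ^ 2, X 2 ^ 2 - X 4]

lemma I_sE_eq_span_minors : I_sE = Ideal.span (Set.range sEMatrix.minors) := by
  have : sEMatrix.minors = ![n₁, n₂, n₃] := by
    ext i; fin_cases i <;> rfl
  rw [I_sE, this]
  congr 1
  simp only [range_cons, range_empty, Set.union_empty, Set.singleton_union]

noncomputable def fiberEval (c : ℂ) : MvPolynomial (Fin 6) ℂ →+* (MvPolynomial (Fin 4) ℂ)[X] :=
  (aeval ![Polynomial.C (C c), Polynomial.C (X 0), Polynomial.C (X 1), Polynomial.X,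
    Polynomial.C (X 2), Polynomial.C (X 3)]).toRingHom

noncomputable def fiberSection : (MvPolynomial (Fin 4) ℂ)[X] →+* MvPolynomial (Fin 6) ℂ :=
  Polynomial.eval₂RingHom (rename ![1, 2, 4, 5]).toRingHom (X 3)

lemma fiberEval_fiberSection (c : ℂ) (y : (MvPolynomial (Fin 4) ℂ)[X]) :
    fiberEval c (fiberSection y) = y := by
  suffices (fiberEval c).comp fiberSection = RingHom.id _ from congrArg (· y) this
  refine Polynomial.ringHom_ext (fun r => ?_) (by simp [fiberEval, fiberSection])
  suffices ((fiberEval c).comp fiberSection).comp Polynomial.C = Polynomial.C from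
    congrArg (· r) this
  refine MvPolynomial.ringHom_ext (fun r => by simp [fiberEval, fiberSection]) (fun i => ?_)
  fin_cases i <;> simp [fiberEval, fiberSection]

lemma ker_fiberEval (c : ℂ) : RingHom.ker (fiberEval c) = Ideal.span {X 0 - C c} := by
  set J := Ideal.span {(X 0 - C c : MvPolynomial (Fin 6) ℂ)}
  have hsec : ∀ f, Ideal.Quotient.mk J (fiberSection (fiberEval c f)) = Ideal.Quotient.mk J f := by
    suffices (Ideal.Quotient.mk J).comp (fiberSection.comp (fiberEval c)) = Ideal.Quotient.mk J from
      fun f => congrArg (· f) this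
    refine MvPolynomial.ringHom_ext (fun r => by simp [fiberEval, fiberSection]) (fun i => ?_)
    fin_cases i <;> simp [fiberEval, fiberSection]
    exact (Ideal.Quotient.eq.mpr (Ideal.mem_span_singleton_self _)).symm
  refine le_antisymm (fun f hf => ?_) ?_
  · rw [RingHom.mem_ker] at hf
    rw [← Ideal.Quotient.eq_zero_iff_mem, ← hsec, hf, map_zero, map_zero]
  · rw [Ideal.span_le, Set.singleton_subset_iff, SetLike.mem_coe, RingHom.mem_ker]
    simp [fiberEval]

lemma sEMatrix_map_fiberEval (c : ℂ) : sEMatrix.map (fiberEval c) =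
    Polynomial.fiberMatrix (X 0 ^ 2 + C c ^ 5 * X 3 ^ 5) (X 1) (X 0 ^ 2) (X 2) (X 1 ^ 2 - X 2) := by
  ext i j; fin_cases i <;> fin_cases j <;> simp [sEMatrix, Polynomial.fiberMatrix, fiberEval]

theorem mem_I_sE_of_X_sub_C_mul_mem (c : ℂ) {f : MvPolynomial (Fin 6) ℂ}
    (h : (X 0 - C c) * f ∈ I_sE) : f ∈ I_sE := by
  have hne : (X 0 - C c : MvPolynomial (Fin 6) ℂ) ≠ 0 := fun h0 => by
    simpa using congrArg (eval fun _ => c + 1) h0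
  have hbd : ∀ x : MvPolynomial (Fin 4) ℂ, X 2 ∣ X 1 * x → X 2 ∣ x := fun x hx =>
    (X_prime.dvd_or_dvd hx).resolve_left (by simp)
  have hm : (X 1 * (X 1 ^ 2 - X 2) - X 0 ^ 2 * X 2 : MvPolynomial (Fin 4) ℂ) ≠ 0 := fun h0 => by
    simpa using congrArg (eval ![0, 1, 0, 0]) h0
  rw [I_sE_eq_span_minors] at h ⊢
  refine Ideal.mem_span_range_of_mul_mem_of_syzygy_lift (IsRegular.of_ne_zero hne).left
    (exists_syzygy_lift_minors (fiberEval c) fiberSection (fiberEval_fiberSection c)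
      (ker_fiberEval c) sEMatrix ?_) h
  rw [sEMatrix_map_fiberEval]
  exact fun g hg => Polynomial.mem_laplaceSpan_of_dotProduct_minors_eq_zero (X_ne_zero 2) hbd hm hg

lemma isSMulRegular_X_sub_C (c : ℂ) :
    IsSMulRegular (MvPolynomial (Fin 6) ℂ ⧸ I_sE) (Polynomial.X - Polynomial.C c) := by
  have hsmul : ∀ f, (Polynomial.X - Polynomial.C c) • Ideal.Quotient.mk I_sE f =
      Ideal.Quotient.mk I_sE ((X 0 - C c) * f) := fun f => by
    rw [Algebra.smul_def]
    simp only [RingHom.algebraMap_toAlgebra, AlgHom.toRingHom_eq_coe, RingHom.coe_coe,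
      Polynomial.aeval_X, Polynomial.aeval_C, map_mul, map_sub,
      ← Ideal.Quotient.mk_algebraMap, MvPolynomial.algebraMap_eq]
  intro x y hxy
  obtain ⟨f, rfl⟩ := Ideal.Quotient.mk_surjective x
  obtain ⟨g, rfl⟩ := Ideal.Quotient.mk_surjective y
  change _ • _ = _ • _ at hxy
  rw [hsmul, hsmul, Ideal.Quotient.eq, ← mul_sub] at hxy
  exact Ideal.Quotient.eq.mpr (mem_I_sE_of_X_sub_C_mul_mem c hxy)

theorem stmt_18 :
    Module.Flat (Polynomial ℂ) (MvPolynomial (Fin 6) ℂ ⧸ I_sE) := by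
  have := Polynomial.isTorsionFree_of_isSMulRegular_X_sub_C (k := ℂ)
    (M := MvPolynomial (Fin 6) ℂ ⧸ I_sE) isSMulRegular_X_sub_C
  infer_instance
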